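/- arXiv:math/9505211 — 4 statements merged into one kernel-verified Lean document; each statement's English description precedes it below -/
import Mathlib

section
/- For any v pools over n objects, if the design identifies all positive sets of size at most p with at most h excess confirmatory tests (i.e., each outcome-candidate set has size at most |S| + h), then the number n satisfies Σ_{k=0}^{p} C(n,k) / (Σ_{j=0}^{h} C(n,j)) ≤ 2^v. -/
open Finset

lemma card_filter_card_le (m t : ℕ) :
    (Finset.univ.filter fun S : Finset (Fin m) => S.card ≤ t).card
      = ∑ k ∈ Finset.range (t + 1), m.choose k := by
  classical
  have h : (Finset.univ.filter fun S : Finset (Fin m) => S.card ≤ t)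
      = (Finset.range (t + 1)).biUnion (fun k => Finset.powersetCard k Finset.univ) := by
    ext S
    simp [Nat.lt_succ_iff, Finset.mem_powersetCard_univ, eq_comm]
  rw [h, Finset.card_biUnion]
  · simp [Finset.card_powersetCard]
  · intro a _ b _ hab
    simp only [Finset.disjoint_left, Finset.mem_powersetCard_univ]
    intro S h1 h2
    exact hab (h1.symm.trans h2)

/-- If a design of `v` pools over `n` objects identifies every positive set of size at most
`p` with at most `h` excess confirmatory tests (the candidate set `C(S)` contains `S` and has
at most `h` extra elements), then `∑_{k=0}^{p} C(n,k) ≤ 2^v · ∑_{j=0}^{h} C(n,j)`. -/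
theorem stmt4 (n v p h : ℕ) (σ : Fin n → Finset (Fin v))
    (hdes : ∀ S : Finset (Fin n), S.card ≤ p →
      S ⊆ (Finset.univ.filter fun x => σ x ⊆ S.biUnion σ) ∧
      ((Finset.univ.filter fun x => σ x ⊆ S.biUnion σ) \ S).card ≤ h) :
    (∑ k ∈ Finset.range (p + 1), n.choose k) ≤
      2 ^ v * ∑ j ∈ Finset.range (h + 1), n.choose j := by
  classical
  set A : Finset (Finset (Fin n)) := Finset.univ.filter (fun S => S.card ≤ p) with hA
  set B : Finset (Finset (Fin n)) := Finset.univ.filter (fun S => S.card ≤ h) with hB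
  set f : Finset (Fin n) → Finset (Fin v) := fun S => S.biUnion σ with hf
  have key : A.card ≤ B.card * (A.image f).card := by
    apply Finset.card_le_mul_card_image
    intro T hT
    set C : Finset (Fin n) := Finset.univ.filter (fun x => σ x ⊆ T) with hC
    apply Finset.card_le_card_of_injOn (fun S => C \ S)
    · intro S hS
      simp only [Finset.mem_coe, Finset.mem_filter, hA] at hS
      obtain ⟨⟨-, hSp⟩, hST⟩ := hS
      have hST2 : S.biUnion σ = T := hST
      have := (hdes S hSp).2
      rw [hST2] at this
      simp only [Finset.mem_coe, hB, Finset.mem_filter, Finset.mem_univ, true_and]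
      exact this
    · intro S hS S' hS' heq
      simp only [Finset.mem_coe, Finset.mem_filter, hA] at hS hS'
      obtain ⟨⟨-, hSp⟩, hST⟩ := hS
      obtain ⟨⟨-, hSp'⟩, hST'⟩ := hS'
      have hST2 : S.biUnion σ = T := hST
      have hST2' : S'.biUnion σ = T := hST'
      have h1 : S ⊆ C := by have := (hdes S hSp).1; rwa [hST2] at this
      have h2 : S' ⊆ C := by have := (hdes S' hSp').1; rwa [hST2'] at this
      have := congrArg (fun D => C \ D) heq
      simpa [Finset.sdiff_sdiff_eq_self h1, Finset.sdiff_sdiff_eq_self h2] using this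
  have himg : (A.image f).card ≤ 2 ^ v := by
    calc (A.image f).card ≤ (Finset.univ : Finset (Finset (Fin v))).card :=
          Finset.card_le_card (Finset.subset_univ _)
      _ = 2 ^ v := by simp
  have hAcard : A.card = ∑ k ∈ Finset.range (p + 1), n.choose k := card_filter_card_le n p
  have hBcard : B.card = ∑ j ∈ Finset.range (h + 1), n.choose j := card_filter_card_le n h
  calc (∑ k ∈ Finset.range (p + 1), n.choose k) = A.card := hAcard.symm
    _ ≤ B.card * (A.image f).card := key
    _ ≤ B.card * 2 ^ v := Nat.mul_le_mul_left _ himg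
    _ = 2 ^ v * ∑ j ∈ Finset.range (h + 1), n.choose j := by rw [hBcard, Nat.mul_comm]
end

section
/- For an adaptive strategy realized as a decision tree of depth d using at most v distinct pools, the number of distinguishable positive sets is at most min(2^d, Σ_{k=0}^{d} C(v,k)); consequently, if exactly one positive among n objects must be identified, then both 2^d ≥ n and Σ_{k=0}^{d} C(v,k) ≥ n must hold. -/
/-- A binary decision tree for adaptive group testing. -/
inductive DTree (L : Type) where
  | leaf : Finset L → DTree L
  | node : Finset L → DTree L → DTree L → DTree L

namespace DTree

variable {L : Type} [DecidableEq L]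

/-- Run the strategy on the positive set `S`. -/
def run : DTree L → Finset L → Finset L
  | leaf ans, _ => ans
  | node Q t₁ t₂, S => if (Q ∩ S).Nonempty then t₁.run S else t₂.run S

/-- Depth of the decision tree. -/
def depth : DTree L → ℕ
  | leaf _ => 0
  | node _ t₁ t₂ => max t₁.depth t₂.depth + 1

/-- The set of distinct pools queried by the tree. -/
def pools : DTree L → Finset (Finset L)
  | leaf _ => ∅
  | node Q t₁ t₂ => insert Q (t₁.pools ∪ t₂.pools)

end DTree

open Finset

namespace DTree

variable {L : Type} [DecidableEq L]

lemma inter_singleton_nonempty (Q : Finset L) (x : L) :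
    (Q ∩ ({x} : Finset L)).Nonempty ↔ x ∈ Q := by
  constructor
  · rintro ⟨y, hy⟩
    simp only [Finset.mem_inter, Finset.mem_singleton] at hy
    rcases hy with ⟨h1, h2⟩; subst h2; exact h1
  · intro h; exact ⟨x, by simp [h]⟩

lemma run_singleton (Q : Finset L) (t₁ t₂ : DTree L) (x : L) :
    (node Q t₁ t₂).run {x} = if x ∈ Q then t₁.run {x} else t₂.run {x} := by
  simp [run, inter_singleton_nonempty]

/-- Pools along the path of `x` answered "yes". -/
def yes : DTree L → L → Finset (Finset L)
  | leaf _, _ => ∅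
  | node Q t₁ t₂, x => if x ∈ Q then insert Q (t₁.yes x) else t₂.yes x

lemma mem_of_mem_yes : ∀ (T : DTree L) (x : L) (Q : Finset L), Q ∈ T.yes x → x ∈ Q := by
  intro T
  induction T with
  | leaf a => intro x Q h; simp [yes] at h
  | node Q t₁ t₂ ih₁ ih₂ =>
    intro x R h
    by_cases hx : x ∈ Q
    · simp only [yes, if_pos hx, Finset.mem_insert] at h
      rcases h with h | h
      · subst h; exact hx
      · exact ih₁ x R h
    · simp only [yes, if_neg hx] at h
      exact ih₂ x R h

lemma yes_subset_pools : ∀ (T : DTree L) (x : L), T.yes x ⊆ T.pools := by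
  intro T
  induction T with
  | leaf a => intro x; simp [yes]
  | node Q t₁ t₂ ih₁ ih₂ =>
    intro x
    by_cases hx : x ∈ Q
    · simp only [yes, if_pos hx, pools]
      exact Finset.insert_subset_insert _ ((ih₁ x).trans Finset.subset_union_left)
    · simp only [yes, if_neg hx, pools]
      exact ((ih₂ x).trans Finset.subset_union_right).trans (Finset.subset_insert _ _)

lemma card_yes_le_depth : ∀ (T : DTree L) (x : L), (T.yes x).card ≤ T.depth := by
  intro T
  induction T with
  | leaf a => intro x; simp [yes, depth]
  | node Q t₁ t₂ ih₁ ih₂ =>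
    intro x
    by_cases hx : x ∈ Q
    · simp only [yes, if_pos hx, depth]
      calc (insert Q (t₁.yes x)).card ≤ (t₁.yes x).card + 1 := Finset.card_insert_le _ _
        _ ≤ max t₁.depth t₂.depth + 1 := by
            exact Nat.add_le_add_right ((ih₁ x).trans (le_max_left _ _)) 1
    · simp only [yes, if_neg hx, depth]
      exact ((ih₂ x).trans (le_max_right _ _)).trans (Nat.le_succ _)

/-- The run on a singleton is determined by the yes-set (strengthened with a set `s`
of pools known to contain both `x` and `y`). -/
lemma run_eq_of_yes_union_eq : ∀ (T : DTree L) (x y : L) (s : Finset (Finset L)),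
    (∀ R ∈ s, x ∈ R ∧ y ∈ R) → T.yes x ∪ s = T.yes y ∪ s →
    T.run {x} = T.run {y} := by
  intro T
  induction T with
  | leaf a => intro x y s _ _; rfl
  | node Q t₁ t₂ ih₁ ih₂ =>
    intro x y s hs h
    have key : ∀ z : L, (z ∈ Q ∧ (∀ R ∈ s, z ∈ R)) → Q ∈ (node Q t₁ t₂).yes z ∪ s := by
      intro z hz
      simp [yes, hz.1]
    have hxQ : x ∈ Q ↔ Q ∈ (node Q t₁ t₂).yes x ∪ s := by
      constructor
      · intro hx; simp [yes, hx]
      · intro hQ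
        rcases Finset.mem_union.1 hQ with h' | h'
        · exact mem_of_mem_yes _ x Q h'
        · exact (hs Q h').1
    have hyQ : y ∈ Q ↔ Q ∈ (node Q t₁ t₂).yes y ∪ s := by
      constructor
      · intro hy; simp [yes, hy]
      · intro hQ
        rcases Finset.mem_union.1 hQ with h' | h'
        · exact mem_of_mem_yes _ y Q h'
        · exact (hs Q h').2
    have same : (x ∈ Q) ↔ (y ∈ Q) := by rw [hxQ, hyQ, h]
    by_cases hx : x ∈ Q
    · have hy : y ∈ Q := same.1 hx
      rw [run_singleton, run_singleton, if_pos hx, if_pos hy]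
      apply ih₁ x y (insert Q s)
      · intro R hR
        rcases Finset.mem_insert.1 hR with h' | h'
        · subst h'; exact ⟨hx, hy⟩
        · exact hs R h'
      · have h' := h
        simp only [yes, if_pos hx, if_pos hy] at h'
        rwa [Finset.insert_union, Finset.insert_union, ← Finset.union_insert,
          ← Finset.union_insert] at h'
    · have hy : y ∉ Q := fun hy => hx (same.2 hy)
      rw [run_singleton, run_singleton, if_neg hx, if_neg hy]
      apply ih₂ x y s hs
      have h' := h
      simpa only [yes, if_neg hx, if_neg hy] using h'

lemma run_eq_of_yes_eq (T : DTree L) (x y : L) (h : T.yes x = T.yes y) :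
    T.run {x} = T.run {y} := by
  apply run_eq_of_yes_union_eq T x y ∅ (by simp)
  simp [h]

lemma card_image_run_le [Fintype L] : ∀ (T : DTree L),
    (Finset.univ.image (fun x : L => T.run {x})).card ≤ 2 ^ T.depth := by
  intro T
  induction T with
  | leaf a =>
    calc (Finset.univ.image (fun x : L => (leaf a).run {x})).card
        ≤ ({a} : Finset (Finset L)).card := by
          apply Finset.card_le_card
          intro S hS
          simp only [Finset.mem_image] at hS
          rcases hS with ⟨x, _, hx⟩
          simp [← hx, run]
      _ ≤ 2 ^ (leaf a : DTree L).depth := by simp [depth]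
  | node Q t₁ t₂ ih₁ ih₂ =>
    have hsub : (Finset.univ.image (fun x : L => (node Q t₁ t₂).run {x})) ⊆
        (Finset.univ.image (fun x : L => t₁.run {x})) ∪
        (Finset.univ.image (fun x : L => t₂.run {x})) := by
      intro S hS
      simp only [Finset.mem_image, Finset.mem_union] at hS ⊢
      rcases hS with ⟨x, hx, hS⟩
      rw [run_singleton] at hS
      by_cases hq : x ∈ Q
      · left; exact ⟨x, hx, by rwa [if_pos hq] at hS⟩
      · right; exact ⟨x, hx, by rwa [if_neg hq] at hS⟩
    calc (Finset.univ.image (fun x : L => (node Q t₁ t₂).run {x})).card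
        ≤ _ := Finset.card_le_card hsub
      _ ≤ (Finset.univ.image (fun x : L => t₁.run {x})).card +
          (Finset.univ.image (fun x : L => t₂.run {x})).card := Finset.card_union_le _ _
      _ ≤ 2 ^ t₁.depth + 2 ^ t₂.depth := Nat.add_le_add ih₁ ih₂
      _ ≤ 2 ^ (max t₁.depth t₂.depth) + 2 ^ (max t₁.depth t₂.depth) := by
          exact Nat.add_le_add (Nat.pow_le_pow_right (by norm_num) (le_max_left _ _))
            (Nat.pow_le_pow_right (by norm_num) (le_max_right _ _))
      _ = 2 ^ (node Q t₁ t₂).depth := by rw [depth]; ring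

end DTree

/-- If a decision tree of depth at most `d` using at most `v` distinct pools correctly
identifies a single positive object among `n` objects, then `2^d ≥ n` and
`∑_{k=0}^{d} C(v,k) ≥ n`. -/
theorem stmt11 {L : Type} [DecidableEq L] [Fintype L] (d v : ℕ) (T : DTree L)
    (hd : T.depth ≤ d) (hv : T.pools.card ≤ v)
    (hcorrect : ∀ x : L, T.run {x} = {x}) :
    Fintype.card L ≤ 2 ^ d ∧ Fintype.card L ≤ ∑ k ∈ Finset.range (d + 1), v.choose k := by
  constructor
  · -- 2 ^ d bound
    have hinj : Function.Injective (fun x : L => T.run {x}) := by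
      intro x y h
      simp only [hcorrect] at h
      exact Finset.singleton_injective h
    calc Fintype.card L = (Finset.univ.image (fun x : L => T.run {x})).card := by
          rw [Finset.card_image_of_injective _ hinj, Finset.card_univ]
      _ ≤ 2 ^ T.depth := DTree.card_image_run_le T
      _ ≤ 2 ^ d := Nat.pow_le_pow_right (by norm_num) hd
  · -- binomial sum bound
    have hinj : Function.Injective (fun x : L => T.yes x) := by
      intro x y h
      have := DTree.run_eq_of_yes_eq T x y h
      rw [hcorrect, hcorrect] at this
      exact Finset.singleton_injective this
    have hmaps : ∀ x : L, T.yes x ∈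
        (Finset.range (d + 1)).biUnion (fun k => Finset.powersetCard k T.pools) := by
      intro x
      simp only [Finset.mem_biUnion, Finset.mem_range, Finset.mem_powersetCard]
      exact ⟨(T.yes x).card, Nat.lt_succ_of_le ((DTree.card_yes_le_depth T x).trans hd),
        DTree.yes_subset_pools T x, rfl⟩
    calc Fintype.card L
        ≤ ((Finset.range (d + 1)).biUnion (fun k => Finset.powersetCard k T.pools)).card := by
          rw [← Finset.card_univ]
          exact Finset.card_le_card_of_injOn _ (fun x _ => hmaps x) (hinj.injOn)
      _ ≤ ∑ k ∈ Finset.range (d + 1), (Finset.powersetCard k T.pools).card :=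
          Finset.card_biUnion_le
      _ ≤ ∑ k ∈ Finset.range (d + 1), v.choose k := by
          apply Finset.sum_le_sum
          intro k _
          rw [Finset.card_powersetCard]
          exact Nat.choose_le_choose k hv
end

section
/- Under the bounded bandwidth assumption B(w), a positive set of size at most p can be identified nonadaptively with a number of pools depending only on w and p (not on n): specifically, if a design of v₀ pools over 2w objects is p-cover-free, then assigning each object x_i the signature of (i mod 2w) yields a design of v₀ pools over n objects that correctly identifies every positive set of size ≤ p contained in a window of length w. -/
/-!
Reduction mod `2w` is injective on any window of length `w`, so it pulls the `p`-cover-free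
family on `{0, …, 2w-1}` back to a `p`-cover-free family on the window; and with a cover-free
family, an object lies in `S` exactly when its signature is covered by the signatures of `S`.
-/

open Finset

def IsCoverFree {ι β : Type*} [DecidableEq β] (p : ℕ) (D : Set ι) (τ : ι → Finset β) : Prop :=
  ∀ x ∈ D, ∀ Y : Finset ι, ↑Y ⊆ D → x ∉ Y → Y.card ≤ p → ¬ τ x ⊆ Y.biUnion τ

namespace IsCoverFree

variable {ι κ β : Type*} [DecidableEq β] {p : ℕ} {τ : ι → Finset β}

theorem comp [DecidableEq ι] {D : Set ι} (h : IsCoverFree p D τ) {I : Set κ} {f : κ → ι}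
    (hinj : Set.InjOn f I) (hmaps : Set.MapsTo f I D) : IsCoverFree p I (fun k => τ (f k)) := by
  intro x hx Y hYI hxY hcard hcover
  have hfx : f x ∉ Y.image f := by
    intro hfx
    obtain ⟨y, hy, hxy⟩ := mem_image.mp hfx
    exact hxY (hinj (hYI hy) hx hxy ▸ hy)
  refine h (f x) (hmaps hx) (Y.image f) ?_ hfx (card_image_le.trans hcard) ?_
  · simpa only [coe_image] using (hmaps.mono_left hYI).image_subset
  · simpa only [image_biUnion] using hcover

theorem filter_subset_biUnion_eq {I S : Finset ι} (h : IsCoverFree p I τ) (hSI : S ⊆ I)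
    (hcard : S.card ≤ p) : I.filter (fun i => τ i ⊆ S.biUnion τ) = S := by
  refine Subset.antisymm (fun i hi => ?_) fun s hs =>
    mem_filter.mpr ⟨hSI hs, subset_biUnion_of_mem τ hs⟩
  obtain ⟨hiI, hcover⟩ := mem_filter.mp hi
  by_contra hiS
  exact h i hiI S (by exact_mod_cast hSI) hiS hcard hcover

end IsCoverFree

theorem stmt14_general (v₀ p w : ℕ) (τ : ℕ → Finset (Fin v₀))
    (hcf : ∀ x < 2 * w, ∀ Y : Finset ℕ, (∀ y ∈ Y, y < 2 * w) → x ∉ Y → Y.card ≤ p →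
      ¬ τ x ⊆ Y.biUnion τ) :
    (∀ a : ℕ, Set.InjOn (· % (2 * w)) (Set.Ico a (a + 2 * w))) ∧
    (∀ (a : ℕ) (S : Finset ℕ), S ⊆ Finset.Ico a (a + w) → S.card ≤ p →
      ((Finset.Ico a (a + w)).filter fun i =>
          τ (i % (2 * w)) ⊆ S.biUnion fun s => τ (s % (2 * w))) = S) := by
  have hinj (a : ℕ) : Set.InjOn (· % (2 * w)) (Set.Ico a (a + 2 * w)) := by
    simpa only [coe_Ico] using Nat.mod_injOn_Ico a (2 * w)
  refine ⟨hinj, fun a S hS hcard => ?_⟩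
  have hτ : IsCoverFree p (Set.Iio (2 * w)) τ := fun x hx Y hY => hcf x hx Y fun y hy => hY hy
  have hmaps : Set.MapsTo (· % (2 * w)) (Set.Ico a (a + w)) (Set.Iio (2 * w)) :=
    fun i hi => Nat.mod_lt i (by grind)
  have hwindow := hτ.comp ((hinj a).mono (Set.Ico_subset_Ico_right (by omega))) hmaps
  exact IsCoverFree.filter_subset_biUnion_eq (by simpa only [coe_Ico] using hwindow) hS hcard

/-- Bounded bandwidth `B(w)`: given a `p`-cover-free family `τ 0, …, τ (2w−1)` of subsets of
a `v₀`-set, assign object `i` the signature `τ (i % 2w)`. Then (key lemma) `i ↦ i % 2w` is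
injective on any interval of length at most `2w`, and for any positive set `S` of size at
most `p` contained in a window of length `w`, the candidate set restricted to that window
equals `S`. -/
theorem stmt14 (v₀ p w : ℕ) (hw : 1 ≤ w) (τ : ℕ → Finset (Fin v₀))
    (hcf : ∀ x < 2 * w, ∀ Y : Finset ℕ, (∀ y ∈ Y, y < 2 * w) → x ∉ Y → Y.card ≤ p →
      ¬ τ x ⊆ Y.biUnion τ) :
    (∀ a : ℕ, Set.InjOn (· % (2 * w)) (Set.Ico a (a + 2 * w))) ∧
    (∀ (a : ℕ) (S : Finset ℕ), S ⊆ Finset.Ico a (a + w) → S.card ≤ p →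
      ((Finset.Ico a (a + w)).filter fun i =>
          τ (i % (2 * w)) ⊆ S.biUnion fun s => τ (s % (2 * w))) = S) :=
  stmt14_general v₀ p w τ hcf
end

section
/- Using the probabilistic bound, for q = 1/(p+1) the quantity q(1−q)^p is at least 1/(e(p+1)), and hence (1 − q(1−q)^p)^v ≤ exp(−v/(e(p+1))); if n satisfies (p+1)·C(n−1, p)·n·exp(−v/(e(p+1))) < 1 then a p-cover-free family of n subsets of {1,…,v} exists. -/
open Finset

/-- `p`-cover-free family (Erdős–Frankl–Füredi): no signature is contained in the union of
the signatures of `p` other objects. -/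
def CoverFree (v p n : ℕ) (σ : Fin n → Finset (Fin v)) : Prop :=
  ∀ (x : Fin n) (Y : Finset (Fin n)), x ∉ Y → Y.card = p → ¬ σ x ⊆ Y.biUnion σ


lemma aux_part1 (p : ℕ) : 1 / (Real.exp 1 * (p + 1)) ≤
    (1 / ((p : ℝ) + 1)) * (1 - 1 / ((p : ℝ) + 1)) ^ p := by
  have hp1 : (0:ℝ) < (p:ℝ) + 1 := by positivity
  have key : (1:ℝ) / Real.exp 1 ≤ (1 - 1/((p:ℝ)+1))^p := by
    rcases Nat.eq_zero_or_pos p with h | h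
    · subst h
      norm_num
      rw [inv_le_one₀ (Real.exp_pos 1)]
      linarith [Real.add_one_le_exp (1:ℝ)]
    · have hp0 : (0:ℝ) < p := by exact_mod_cast h
      have h1 : 1 - 1/((p:ℝ)+1) = 1 / (1 + 1/(p:ℝ)) := by
        field_simp
        ring
      have h2 : (1 + 1/(p:ℝ))^p ≤ Real.exp 1 := by
        calc (1 + 1/(p:ℝ))^p ≤ (Real.exp (1/(p:ℝ)))^p := by
              apply pow_le_pow_left₀ (by positivity)
              linarith [Real.add_one_le_exp (1/(p:ℝ))]
          _ = Real.exp 1 := by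
              rw [← Real.exp_nat_mul]; congr 1; field_simp
      rw [h1, div_pow, one_pow]
      rw [div_le_div_iff₀ (Real.exp_pos 1) (by positivity)]
      nlinarith
  have h3 : 1 / (Real.exp 1 * ((p:ℝ) + 1)) = (1/((p:ℝ)+1)) * (1/Real.exp 1) := by
    field_simp
  rw [h3]
  exact mul_le_mul_of_nonneg_left key (by positivity)

lemma aux_part2 (v p : ℕ) :
    (1 - (1 / ((p : ℝ) + 1)) * (1 - 1 / ((p : ℝ) + 1)) ^ p) ^ v ≤
      Real.exp (-(v : ℝ) / (Real.exp 1 * (p + 1))) := by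
  set t : ℝ := (1 / ((p : ℝ) + 1)) * (1 - 1 / ((p : ℝ) + 1)) ^ p with ht
  have hp1 : (0:ℝ) < (p:ℝ) + 1 := by positivity
  have hq : (0:ℝ) ≤ 1 - 1/((p:ℝ)+1) := by
    rw [sub_nonneg, div_le_one hp1]; linarith
  have ht0 : 0 ≤ t := by positivity
  have ht1 : t ≤ 1 := by
    have h1 : (1 - 1/((p:ℝ)+1))^p ≤ 1 := by
      apply pow_le_one₀ hq; nlinarith [one_div_pos.mpr hp1]
    have h2 : 1/((p:ℝ)+1) ≤ 1 := by rw [div_le_one hp1]; linarith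
    calc t ≤ 1 * 1 := by apply mul_le_mul h2 h1 (by positivity) (by norm_num)
      _ = 1 := by ring
  have hte : 1 / (Real.exp 1 * ((p:ℝ) + 1)) ≤ t := aux_part1 p
  calc (1 - t)^v ≤ (Real.exp (-t))^v := by
        apply pow_le_pow_left₀ (by linarith)
        linarith [Real.add_one_le_exp (-t)]
    _ = Real.exp (-t * v) := by rw [← Real.exp_nat_mul]; ring_nf
    _ ≤ Real.exp (-(v : ℝ) / (Real.exp 1 * (p + 1))) := by
        apply Real.exp_le_exp.mpr
        have hmul := mul_le_mul_of_nonneg_right hte (Nat.cast_nonneg v : (0:ℝ) ≤ (v:ℝ))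
        rw [neg_div, neg_mul]
        apply neg_le_neg
        calc (v:ℝ)/(Real.exp 1*((p:ℝ)+1)) = (1/(Real.exp 1*((p:ℝ)+1)))*v := by ring
          _ ≤ t*v := hmul

lemma aux_colcount (p n : ℕ) (x : Fin n) (Y : Finset (Fin n)) (hxY : x ∉ Y)
    (hY : Y.card = p) (hn : p < n) :
    (univ.filter (fun h : Fin n → Fin (p+1) =>
      ¬ (h x = 0 → ∃ y ∈ Y, h y = 0))).card = p^p * (p+1)^(n-1-p) := by
  have hset : univ.filter (fun h : Fin n → Fin (p+1) =>
      ¬ (h x = 0 → ∃ y ∈ Y, h y = 0)) =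
      Fintype.piFinset (fun i : Fin n =>
        if i = x then ({0} : Finset (Fin (p+1)))
        else if i ∈ Y then univ.erase 0 else univ) := by
    ext h
    simp only [mem_filter, mem_univ, true_and, Fintype.mem_piFinset]
    rw [_root_.not_imp]
    push_neg
    constructor
    · rintro ⟨h0, hne⟩
      intro i
      by_cases hix : i = x
      · simp [hix, h0]
      · by_cases hiY : i ∈ Y
        · simp [hix, hiY, hne i hiY]
        · simp [hix, hiY]
    · intro hall
      constructor
      · have := hall x; simpa using this
      · intro y hy
        have hyx : ¬ (y = x) := fun e => hxY (e ▸ hy)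
        have := hall y
        simp [hyx, hy, mem_erase] at this
        exact this
  rw [hset, Fintype.card_piFinset]
  have hprod : ∀ i : Fin n,
      (if i = x then ({0} : Finset (Fin (p+1)))
        else if i ∈ Y then univ.erase 0 else univ).card =
      (if i = x then 1 else if i ∈ Y then p else p+1) := by
    intro i
    by_cases hix : i = x
    · simp [hix]
    · by_cases hiY : i ∈ Y
      · simp [hix, hiY, card_erase_of_mem]
      · simp [hix, hiY]
  rw [Finset.prod_congr rfl (fun i _ => hprod i)]
  rw [← Finset.prod_mul_prod_compl (insert x Y)]
  have h1 : ∏ i ∈ insert x Y, (if i = x then 1 else if i ∈ Y then p else p+1) = p^p := by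
    rw [Finset.prod_insert hxY, if_pos rfl, one_mul]
    rw [Finset.prod_congr rfl (fun y hy => ?_), Finset.prod_const, hY]
    have hyx : ¬ (y = x) := fun e => hxY (e ▸ hy)
    simp [hyx, hy]
  have h2 : ∏ i ∈ (insert x Y)ᶜ, (if i = x then 1 else if i ∈ Y then p else p+1)
      = (p+1)^(n-1-p) := by
    rw [Finset.prod_congr rfl (fun i hi => ?_), Finset.prod_const]
    · congr 1
      rw [card_compl, card_insert_of_notMem hxY, hY]
      simp [Fintype.card_fin]
      omega
    · rw [Finset.mem_compl, Finset.mem_insert] at hi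
      push_neg at hi
      simp [hi.1, hi.2]
  rw [h1, h2]

lemma harith' : ∀ a b T N : ℕ, a + b = T → b = N → N ≤ T → a = T - N := by
  intro a b T N h1 h2 h3; omega

lemma harith2 : ∀ a b c : ℕ, a ≤ b → b < c → a < c := by
  intro a b c h1 h2; omega

def BadSet (v p n : ℕ) (x : Fin n) (Y : Finset (Fin n)) :
    Finset (Fin v → Fin n → Fin (p+1)) :=
  Fintype.piFinset
    (fun _ => univ.filter (fun h : Fin n → Fin (p+1) => h x = 0 → ∃ y ∈ Y, h y = 0))

lemma aux_exists (v p n : ℕ) (hn : p < n)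
    (key : n * Nat.choose (n-1) p * ((p+1)^n - p^p * (p+1)^(n-1-p))^v < ((p+1)^n)^v) :
    ∃ σ : Fin n → Finset (Fin v), CoverFree v p n σ := by
  classical
  set B : ℕ := (p+1)^n - p^p * (p+1)^(n-1-p) with hB
  have hBadcard : ∀ x Y, x ∉ Y → Y.card = p → (BadSet v p n x Y).card = B^v := by
    intro x Y hxY hY
    rw [BadSet, Fintype.card_piFinset]
    have hcc := aux_colcount p n x Y hxY hY hn
    have hsplit := Finset.card_filter_add_card_filter_not (s := (univ : Finset (Fin n → Fin (p+1))))
      (p := fun h => h x = 0 → ∃ y ∈ Y, h y = 0)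
    have htot : (univ : Finset (Fin n → Fin (p+1))).card = (p+1)^n := by simp
    rw [Finset.prod_const, Finset.card_univ, Fintype.card_fin]
    congr 1
    have hle : p^p * (p+1)^(n-1-p) ≤ (p+1)^n := by
      have e1 : p + (n-1-p) ≤ n := by clear hcc hsplit htot; omega
      calc p^p * (p+1)^(n-1-p) ≤ (p+1)^p * (p+1)^(n-1-p) :=
            Nat.mul_le_mul (Nat.pow_le_pow_left (Nat.le_succ p) p) le_rfl
        _ = (p+1)^(p + (n-1-p)) := by rw [pow_add]
        _ ≤ (p+1)^n := Nat.pow_le_pow_right (Nat.succ_pos p) e1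
    rw [hB]
    exact harith' _ _ _ _ (htot ▸ hsplit) hcc hle
  set big : Finset (Fin v → Fin n → Fin (p+1)) :=
    univ.biUnion (fun x : Fin n => ((univ.erase x).powersetCard p).biUnion (fun Y => BadSet v p n x Y)) with hbigdef
  have hbig : big.card < Fintype.card (Fin v → Fin n → Fin (p+1)) := by
    have h1 : big.card ≤ n * Nat.choose (n-1) p * B^v := by
      calc big.card ≤ ∑ x : Fin n, (((univ.erase x).powersetCard p).biUnion (fun Y => BadSet v p n x Y)).card :=
          Finset.card_biUnion_le
        _ ≤ ∑ _x : Fin n, Nat.choose (n-1) p * B^v := by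
            apply Finset.sum_le_sum
            intro x _
            calc (((univ.erase x).powersetCard p).biUnion (fun Y => BadSet v p n x Y)).card
                ≤ ∑ Y ∈ (univ.erase x).powersetCard p, (BadSet v p n x Y).card := Finset.card_biUnion_le
              _ = Nat.choose (n-1) p * B^v := by
                  rw [Finset.sum_congr rfl (fun Y hY => ?_), Finset.sum_const, smul_eq_mul]
                  · congr 1
                    rw [Finset.card_powersetCard, card_erase_of_mem (mem_univ x), Finset.card_univ,
                      Fintype.card_fin]
                  · rw [Finset.mem_powersetCard] at hY
                    exact hBadcard x Y (fun hx => (Finset.mem_erase.mp (hY.1 hx)).1 rfl) hY.2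
        _ = n * Nat.choose (n-1) p * B^v := by
            rw [Finset.sum_const, smul_eq_mul, Finset.card_univ, Fintype.card_fin, mul_assoc]
    have h2 : Fintype.card (Fin v → Fin n → Fin (p+1)) = ((p+1)^n)^v := by simp [pow_mul]
    omega
  obtain ⟨g, hg⟩ : ∃ g, g ∉ big := by
    by_contra hc
    push_neg at hc
    have hsub : (univ : Finset (Fin v → Fin n → Fin (p+1))) ⊆ big := fun g _ => hc g
    have hle := Finset.card_le_card hsub
    rw [Finset.card_univ] at hle
    omega
  refine ⟨fun x => univ.filter (fun i => g i x = 0), ?_⟩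
  intro x Y hxY hY hsub
  apply hg
  rw [hbigdef]
  apply Finset.mem_biUnion.mpr ⟨x, mem_univ x, ?_⟩
  apply Finset.mem_biUnion.mpr ⟨Y, ?_, ?_⟩
  · rw [Finset.mem_powersetCard]
    exact ⟨fun y hy => Finset.mem_erase.mpr ⟨fun e => hxY (e ▸ hy), mem_univ y⟩, hY⟩
  · rw [BadSet, Fintype.mem_piFinset]
    intro i
    rw [mem_filter]
    refine ⟨mem_univ _, fun h0 => ?_⟩
    have hi : i ∈ univ.filter (fun j => g j x = 0) := by simp [h0]
    have hmem := hsub hi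
    rw [Finset.mem_biUnion] at hmem
    obtain ⟨y, hy, hiy⟩ := hmem
    exact ⟨y, hy, (Finset.mem_filter.mp hiy).2⟩

/-- For `q = 1/(p+1)` one has `q(1−q)^p ≥ 1/(e(p+1))`, hence
`(1 − q(1−q)^p)^v ≤ exp(−v/(e(p+1)))`; and if
`(p+1)·C(n−1,p)·n·exp(−v/(e(p+1))) < 1` then a `p`-cover-free family of `n` subsets of a
`v`-set exists. -/
theorem stmt16 (v p n : ℕ) :
    (1 / (Real.exp 1 * (p + 1)) ≤
        (1 / ((p : ℝ) + 1)) * (1 - 1 / ((p : ℝ) + 1)) ^ p) ∧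
    ((1 - (1 / ((p : ℝ) + 1)) * (1 - 1 / ((p : ℝ) + 1)) ^ p) ^ v ≤
        Real.exp (-(v : ℝ) / (Real.exp 1 * (p + 1)))) ∧
    (((p : ℝ) + 1) * ((n - 1).choose p : ℝ) * (n : ℝ) *
          Real.exp (-(v : ℝ) / (Real.exp 1 * (p + 1))) < 1 →
      ∃ σ : Fin n → Finset (Fin v), CoverFree v p n σ) := by
  refine ⟨aux_part1 p, aux_part2 v p, ?_⟩
  intro H
  rcases le_or_gt n p with hnp | hn
  · refine ⟨fun _ => ∅, ?_⟩
    intro x Y hxY hY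
    exfalso
    have hsub : Y ⊆ Finset.univ.erase x :=
      fun y hy => Finset.mem_erase.mpr ⟨fun e => hxY (e ▸ hy), mem_univ y⟩
    have hc : Y.card ≤ n - 1 := by
      simpa using Finset.card_le_card hsub
    have hn0 := x.pos
    omega
  · apply aux_exists v p n hn
    set t : ℝ := (1 / ((p : ℝ) + 1)) * (1 - 1 / ((p : ℝ) + 1)) ^ p with ht
    set E : ℝ := Real.exp (-(v : ℝ) / (Real.exp 1 * (p + 1))) with hEdef
    set c : ℝ := ((n - 1).choose p : ℝ) with hcdef
    have hE : (0:ℝ) ≤ E := (Real.exp_pos _).le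
    have hc0 : (0:ℝ) ≤ c := by rw [hcdef]; positivity
    have h2 : (1 - t)^v ≤ E := aux_part2 v p
    have hlt1 : (n:ℝ) * c * (1 - t)^v < 1 := by
      have s1 : (n:ℝ) * c * (1 - t)^v ≤ (n:ℝ) * c * E :=
        mul_le_mul_of_nonneg_left h2 (by positivity)
      have s2 : (n:ℝ) * c * E < 1 := by nlinarith [mul_nonneg (mul_nonneg (mul_nonneg (Nat.cast_nonneg p : (0:ℝ) ≤ p) hc0) (Nat.cast_nonneg n : (0:ℝ) ≤ n)) hE]
      linarith
    have hle : p^p * (p+1)^(n-1-p) ≤ (p+1)^n := by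
      have e1 : p + (n-1-p) ≤ n := by omega
      calc p^p * (p+1)^(n-1-p) ≤ (p+1)^p * (p+1)^(n-1-p) :=
            Nat.mul_le_mul (Nat.pow_le_pow_left (Nat.le_succ p) p) le_rfl
        _ = (p+1)^(p + (n-1-p)) := by rw [pow_add]
        _ ≤ (p+1)^n := Nat.pow_le_pow_right (Nat.succ_pos p) e1
    have ht_eq : t = (p:ℝ)^p / ((p:ℝ)+1)^(p+1) := by
      rw [ht, show (1:ℝ) - 1/((p:ℝ)+1) = (p:ℝ)/((p:ℝ)+1) from by field_simp; ring, div_pow]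
      rw [pow_succ]
      field_simp
    have hsplitp : ((p:ℝ)+1)^n = ((p:ℝ)+1)^(p+1) * ((p:ℝ)+1)^(n-1-p) := by
      rw [← pow_add]; congr 1; omega
    have hBr : ((p:ℝ)+1)^n - (p:ℝ)^p * ((p:ℝ)+1)^(n-1-p) = (1 - t) * ((p:ℝ)+1)^n := by
      have hne : ((p:ℝ)+1)^(p+1) ≠ 0 := by positivity
      rw [ht_eq, hsplitp]
      field_simp
    have hT : (0:ℝ) < ((p:ℝ)+1)^n := by positivity
    have key_real : (n:ℝ) * c * ((1 - t) * ((p:ℝ)+1)^n)^v < (((p:ℝ)+1)^n)^v := by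
      rw [mul_pow]
      calc (n:ℝ) * c * ((1 - t)^v * (((p:ℝ)+1)^n)^v)
          = ((n:ℝ) * c * (1 - t)^v) * (((p:ℝ)+1)^n)^v := by ring
        _ < 1 * (((p:ℝ)+1)^n)^v := mul_lt_mul_of_pos_right hlt1 (pow_pos hT v)
        _ = (((p:ℝ)+1)^n)^v := one_mul _
    have final : ((n * Nat.choose (n-1) p * ((p+1)^n - p^p*(p+1)^(n-1-p))^v : ℕ) : ℝ)
        < ((((p+1)^n)^v : ℕ) : ℝ) := by
      push_cast [Nat.cast_sub hle]
      rw [hBr]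
      exact key_real
    exact_mod_cast final
end
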